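/- arXiv:2504.03188 — 2 statements merged into one kernel-verified Lean document; each statement's English description precedes it below -/
import Mathlib

section
/- Let v : 𝒳 × [0,1] × 𝒞 × 𝒞 → ℝ^{d_x} be a vector field, locally Lipschitz in x and continuous in t, satisfying the antisymmetry condition v(x, t | c₁, c₂) = −v(x, 1−t | c₂, c₁) for all x, t, c₁, c₂. Let Φ_{c₁→c₂} denote the time-1 flow map of the ODE ẋ(t) = v(x(t), t | c₁, c₂). Then Φ_{c₂→c₁} ∘ Φ_{c₁→c₂} = id, i.e., the transfer maps are mutually inverse (cycle consistency for pairs). -/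
/-- **Cycle consistency of antisymmetric flows.**
Let `v(x, t | c₁, c₂)` be a vector field, continuous in `(x,t)`, satisfying the
antisymmetry `v(x, t | c₁, c₂) = −v(x, 1−t | c₂, c₁)`.  Let `φ c₁ c₂ x₀` be the unique
solution on `[0,1]` of `ẋ = v(x, t | c₁, c₂)` with `x(0) = x₀` (existence and
uniqueness assumed), and `Φ_{c₁→c₂}(x₀) := φ c₁ c₂ x₀ 1` the time-1 flow map.
Then `Φ_{c₂→c₁} ∘ Φ_{c₁→c₂} = id`. -/
theorem stmt13 {d : ℕ} {C : Type*}
    (v : EuclideanSpace ℝ (Fin d) → ℝ → C → C → EuclideanSpace ℝ (Fin d))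
    (hcont : ∀ c₁ c₂, Continuous fun p : EuclideanSpace ℝ (Fin d) × ℝ => v p.1 p.2 c₁ c₂)
    (hanti : ∀ x t c₁ c₂, v x t c₁ c₂ = - v x (1 - t) c₂ c₁)
    (φ : C → C → EuclideanSpace ℝ (Fin d) → ℝ → EuclideanSpace ℝ (Fin d))
    (hinit : ∀ c₁ c₂ x₀, φ c₁ c₂ x₀ 0 = x₀)
    (hderiv : ∀ c₁ c₂ x₀, ∀ t ∈ Set.Icc (0 : ℝ) 1,
      HasDerivAt (φ c₁ c₂ x₀) (v (φ c₁ c₂ x₀ t) t c₁ c₂) t)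
    (huniq : ∀ c₁ c₂ (x₀ : EuclideanSpace ℝ (Fin d)) (g : ℝ → EuclideanSpace ℝ (Fin d)),
      g 0 = x₀ → (∀ t ∈ Set.Icc (0 : ℝ) 1, HasDerivAt g (v (g t) t c₁ c₂) t) →
      ∀ t ∈ Set.Icc (0 : ℝ) 1, g t = φ c₁ c₂ x₀ t) :
    ∀ c₁ c₂ x₀, φ c₂ c₁ (φ c₁ c₂ x₀ 1) 1 = x₀ := by
  intro c₁ c₂ x₀
  set g : ℝ → EuclideanSpace ℝ (Fin d) := fun t => φ c₁ c₂ x₀ (1 - t) with hg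
  have hg0 : g 0 = φ c₁ c₂ x₀ 1 := by simp [hg]
  have hgd : ∀ t ∈ Set.Icc (0 : ℝ) 1, HasDerivAt g (v (g t) t c₂ c₁) t := by
    intro t ht
    have h1t : (1 - t) ∈ Set.Icc (0 : ℝ) 1 := by
      constructor <;> [linarith [ht.2]; linarith [ht.1]]
    have hlin : HasDerivAt (fun s : ℝ => 1 - s) (-1 : ℝ) t := by
      simpa using (hasDerivAt_id t).const_sub 1
    have h := (hderiv c₁ c₂ x₀ (1 - t) h1t).scomp t hlin
    have : HasDerivAt g ((-1 : ℝ) • v (g t) (1 - t) c₁ c₂) t := h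
    rw [hanti (g t) t c₂ c₁]
    simpa using this
  have := huniq c₂ c₁ (φ c₁ c₂ x₀ 1) g hg0 hgd 1 (by norm_num)
  have hg1 : g 1 = x₀ := by simp [hg, hinit]
  rw [← this, hg1]
end

section
/- Let σ*ₙ be a minimizer of Fₙ(σ) = (1/n)Σᵢ‖xᵢ − y_{σ(i)}‖² + β·(1/n)Σᵢ‖cᵢ − c_{σ(i)}‖² over permutations σ ∈ 𝔖ₙ, where ‖xᵢ‖, ‖yᵢ‖ ≤ M for all i. Let Jₙ := {i : σ*ₙ(i) ≠ i} and suppose min_{i≠j} ‖cᵢ − cⱼ‖ > r > 0. Then β·(|Jₙ|/n)·r² ≤ Fₙ(σ*ₙ) ≤ Fₙ(id) = (1/n)Σᵢ‖xᵢ − yᵢ‖² ≤ 4M², and hence |Jₙ|/n ≤ 4M²/(β r²). -/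
open Finset

/-- **Few indices are moved by the minimizer of the penalized matching cost.**
Let `σs` minimize `F(σ) = (1/n)Σᵢ‖xᵢ − y_{σ(i)}‖² + β (1/n)Σᵢ‖cᵢ − c_{σ(i)}‖²` over
permutations, with `‖xᵢ‖, ‖yᵢ‖ ≤ M` and pairwise condition distances exceeding `r > 0`.
With `J = {i | σs i ≠ i}`, we have
`β (|J|/n) r² ≤ F(σs) ≤ F(id) = (1/n)Σ‖xᵢ − yᵢ‖² ≤ 4M²`, hence
`|J|/n ≤ 4M²/(β r²)`. -/
theorem stmt16 {m d n : ℕ} (hn : 0 < n) (M r β : ℝ)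
    (hM : 0 ≤ M) (hr : 0 < r) (hβ : 0 < β)
    (x y : Fin n → EuclideanSpace ℝ (Fin m))
    (hx : ∀ i, ‖x i‖ ≤ M) (hy : ∀ i, ‖y i‖ ≤ M)
    (c : Fin n → EuclideanSpace ℝ (Fin d))
    (hc : ∀ i j, i ≠ j → r < ‖c i - c j‖)
    (F : Equiv.Perm (Fin n) → ℝ)
    (hF : ∀ σ : Equiv.Perm (Fin n), F σ =
      (1 / n) * ∑ i, ‖x i - y (σ i)‖ ^ 2 + β * ((1 / n) * ∑ i, ‖c i - c (σ i)‖ ^ 2))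
    (σs : Equiv.Perm (Fin n)) (hopt : ∀ σ, F σs ≤ F σ) :
    β * ((Finset.univ.filter fun i => σs i ≠ i).card / n : ℝ) * r ^ 2 ≤ F σs ∧
    F σs ≤ F 1 ∧
    F 1 = (1 / n) * ∑ i, ‖x i - y i‖ ^ 2 ∧
    F 1 ≤ 4 * M ^ 2 ∧
    ((Finset.univ.filter fun i => σs i ≠ i).card / n : ℝ) ≤ 4 * M ^ 2 / (β * r ^ 2) := by

  have hnpos : (0:ℝ) < n := by exact_mod_cast hn
  set J := Finset.univ.filter fun i => σs i ≠ i with hJ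
  have h1 : F 1 = (1 / n) * ∑ i, ‖x i - y i‖ ^ 2 := by
    rw [hF]; simp
  have h4 : F 1 ≤ 4 * M ^ 2 := by
    rw [h1]
    have hsum : ∑ i, ‖x i - y i‖ ^ 2 ≤ ∑ _i : Fin n, 4 * M ^ 2 := by
      apply Finset.sum_le_sum
      intro i _
      have h := norm_sub_le (x i) (y i)
      nlinarith [hx i, hy i, norm_nonneg (x i - y i)]
    rw [Finset.sum_const, Finset.card_univ, Fintype.card_fin, nsmul_eq_mul] at hsum
    calc (1/n:ℝ) * ∑ i, ‖x i - y i‖^2 ≤ (1/n) * ((n:ℝ) * (4*M^2)) :=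
          mul_le_mul_of_nonneg_left hsum (by positivity)
      _ = 4*M^2 := by field_simp
  have hlow : β * ((J.card : ℝ)/n) * r^2 ≤ F σs := by
    rw [hF]
    have hsum1 : (0:ℝ) ≤ (1/n) * ∑ i, ‖x i - y (σs i)‖^2 := by positivity
    have hsum2 : (J.card : ℝ) * r^2 ≤ ∑ i, ‖c i - c (σs i)‖^2 := by
      calc (J.card : ℝ) * r^2 = ∑ _i ∈ J, r^2 := by
            rw [Finset.sum_const, nsmul_eq_mul]
        _ ≤ ∑ i ∈ J, ‖c i - c (σs i)‖^2 := by
            apply Finset.sum_le_sum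
            intro i hi
            have hne : σs i ≠ i := (Finset.mem_filter.mp hi).2
            have h := hc i (σs i) (Ne.symm hne)
            nlinarith
        _ ≤ ∑ i, ‖c i - c (σs i)‖^2 := by
            apply Finset.sum_le_sum_of_subset_of_nonneg (Finset.subset_univ J)
            intro i _ _; positivity
    have h2 : β * ((J.card : ℝ)/n) * r^2 ≤ β * ((1/n) * ∑ i, ‖c i - c (σs i)‖^2) := by
      have : (J.card : ℝ)/n * r^2 ≤ (1/n) * ∑ i, ‖c i - c (σs i)‖^2 := by
        rw [div_mul_eq_mul_div, div_le_iff₀ hnpos] at *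
        calc (J.card : ℝ) * r^2 ≤ ∑ i, ‖c i - c (σs i)‖^2 := hsum2
          _ = (1/n) * (∑ i, ‖c i - c (σs i)‖^2) * n := by field_simp
      nlinarith
    linarith
  have hle : F σs ≤ F 1 := hopt 1
  refine ⟨hlow, hle, h1, h4, ?_⟩
  rw [le_div_iff₀ (by positivity)]
  nlinarith
end
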